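/- Let (Ω, Σ, μ) be a finite measure space, E a separable Banach space, m : Σ → E a μ-continuous vector measure with convex range m(Σ), and ≿ a preference relation on Σ with continuous vector representation via m satisfying the convexity axiom: for every A ∈ Σ, the set m({B ∈ Σ : B ≿ A}) is convex. Then there exists a continuous quasiconcave function φ : m(Σ) → ℝ with φ(0) = 0 such that for all A, B ∈ Σ: A ≿ B if and only if φ(m(A)) ≥ φ(m(B)). -/

import Mathlib

/-!
Transported along `m`, the preference is a total preorder on the range `m(Σ)` whose upper and
lower contour sets are closed; the range is connected, being convex, and separable, since `E` is.
By connectedness every strict gap `a ≺ b` contains a point of a countable dense set, and Cantor's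
back-and-forth theorem identifies the indifference classes of the non-extremal such points with the
rationals in `(0, 1)`. The utility of `x` is the supremum of the rationals weakly below `x`; as
these rationals are dense in its range, it is continuous (Eilenberg–Debreu). Its superlevel sets
are directed unions of the convex upper contour sets, hence convex.
-/

open MeasureTheory Filter

/-- The σ-algebra `Σ`, viewed as the type of measurable subsets of `Ω`. -/
abbrev MSet (Ω : Type*) [MeasurableSpace Ω] := {A : Set Ω // MeasurableSet A}

open Set Topology TopologicalSpace Function

section TotalPreorder

variable {X : Type*} [Preorder X] [@Std.Total X (· ≤ ·)]

theorem lt_of_not_ge_of_total {a b : X} (h : ¬b ≤ a) : a < b :=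
  lt_of_le_not_ge ((total_of (· ≤ ·) a b).resolve_right h) h

/-- Cantor's back-and-forth argument, run on the indifference classes of the points of `D`. -/
theorem exists_strictMono_ratIoo_of_countable_of_noExtremes {D : Set X}
    (hD : D.Countable) (hne : D.Nonempty) (hdense : ∀ a b : X, a < b → ∃ d ∈ D, a < d ∧ d < b)
    (hext : ∀ d ∈ D, (∃ a, a < d) ∧ ∃ b, d < b) :
    ∃ e : Ioo (0 : ℚ) 1 → X, StrictMono e ∧ ∀ a b : X, a < b → ∃ q, a < e q ∧ e q < b := by
  classical
  let P := Antisymmetrization D (· ≤ ·)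
  have : Countable D := hD.to_subtype
  have : Countable P := Surjective.countable (f := toAntisymmetrization (· ≤ ·))
    fun p => ⟨_, toAntisymmetrization_ofAntisymmetrization _ p⟩
  have : Nonempty P := ⟨toAntisymmetrization _ ⟨hne.some, hne.some_mem⟩⟩
  have : DenselyOrdered P := ⟨Antisymmetrization.ind _ fun x => Antisymmetrization.ind _ fun y h =>
    let ⟨d, hd, hxd, hdy⟩ := hdense x y h
    ⟨toAntisymmetrization _ ⟨d, hd⟩, hxd, hdy⟩⟩
  have : NoMinOrder P := ⟨Antisymmetrization.ind _ fun x =>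
    let ⟨a, ha⟩ := (hext x x.2).1
    let ⟨d, hd, _, hdx⟩ := hdense a x ha
    ⟨toAntisymmetrization _ ⟨d, hd⟩, hdx⟩⟩
  have : NoMaxOrder P := ⟨Antisymmetrization.ind _ fun x =>
    let ⟨b, hb⟩ := (hext x x.2).2
    let ⟨d, hd, hxd, _⟩ := hdense x b hb
    ⟨toAntisymmetrization _ ⟨d, hd⟩, hxd⟩⟩
  have : Nonempty (Ioo (0 : ℚ) 1) := nonempty_Ioo_subtype one_pos
  obtain ⟨g⟩ := Order.iso_of_countable_dense (Ioo (0 : ℚ) 1) P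
  refine ⟨fun q => (ofAntisymmetrization (· ≤ ·) (g q)).1, fun q q' h =>
    ofAntisymmetrization_lt_ofAntisymmetrization_iff.mpr (g.strictMono h), fun a b h => ?_⟩
  obtain ⟨d, hd, had, hdb⟩ := hdense a b h
  have hd_eq : toAntisymmetrization (· ≤ ·) (ofAntisymmetrization (· ≤ ·)
      (g (g.symm (toAntisymmetrization (· ≤ ·) ⟨d, hd⟩)))) = toAntisymmetrization _ ⟨d, hd⟩ := by
    simp
  refine ⟨g.symm (toAntisymmetrization _ ⟨d, hd⟩), ?_, ?_⟩
  · exact had.trans_le (toAntisymmetrization_le_toAntisymmetrization_iff.mp hd_eq.ge)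
  · exact lt_of_le_of_lt (toAntisymmetrization_le_toAntisymmetrization_iff.mp hd_eq.le) hdb

/-- A point of `D` strictly between two others is neither minimal nor maximal. -/
theorem exists_strictMono_ratIoo_of_countable {D : Set X} (hD : D.Countable)
    (hdense : ∀ a b : X, a < b → ∃ d ∈ D, a < d ∧ d < b) {a b : X} (hab : a < b) :
    ∃ e : Ioo (0 : ℚ) 1 → X, StrictMono e ∧ ∀ a b : X, a < b → ∃ q, a < e q ∧ e q < b := by
  have hdense' : ∀ a b : X, a < b → ∃ d ∈ {d ∈ D | (∃ a, a < d) ∧ ∃ b, d < b}, a < d ∧ d < b :=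
    fun a b h =>
      let ⟨d, hd, had, hdb⟩ := hdense a b h
      ⟨d, ⟨hd, ⟨a, had⟩, b, hdb⟩, had, hdb⟩
  obtain ⟨d, hd, -⟩ := hdense' a b hab
  exact exists_strictMono_ratIoo_of_countable_of_noExtremes
    (hD.mono (sep_subset _ _)) ⟨d, hd⟩ hdense' fun _ hd => hd.2

section Topology

variable [TopologicalSpace X]

theorem isOpen_Ioi_of_total [ClosedIicTopology X] (a : X) : IsOpen (Ioi a) := by
  rw [show Ioi a = (Iic a)ᶜ from ext fun _ => ⟨fun h => h.not_ge, lt_of_not_ge_of_total⟩]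
  exact isClosed_Iic.isOpen_compl

theorem isOpen_Iio_of_total [ClosedIciTopology X] (a : X) : IsOpen (Iio a) := by
  rw [show Iio a = (Ici a)ᶜ from ext fun _ => ⟨fun h => h.not_ge, lt_of_not_ge_of_total⟩]
  exact isClosed_Ici.isOpen_compl

/-- In a preconnected space the open sets `Ioi a` and `Iio b` cover everything when `a < b`, so
they must meet. -/
theorem Dense.exists_between_of_total [ClosedIicTopology X] [ClosedIciTopology X]
    [PreconnectedSpace X] {D : Set X} (hD : Dense D) {a b : X} (hab : a < b) :
    ∃ d ∈ D, a < d ∧ d < b := by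
  have hcover : Ioi a ∪ Iio b = univ := eq_univ_of_forall fun x =>
    (em (x ≤ a)).elim (fun hxa => Or.inr (hxa.trans_lt hab)) (Or.inl ∘ lt_of_not_ge_of_total)
  have hopen := (isOpen_Ioi_of_total a).inter (isOpen_Iio_of_total b)
  obtain ⟨d, hd, hdD⟩ := hD.inter_open_nonempty _ hopen <|
    nonempty_inter (isOpen_Ioi_of_total a) (isOpen_Iio_of_total b) hcover ⟨b, hab⟩ ⟨a, hab⟩
  exact ⟨d, hdD, hd⟩

end Topology

end TotalPreorder

section CutUtility

variable {X : Type*} [Preorder X] (e : Ioo (0 : ℚ) 1 → X)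

/-- The point `0` is inserted so that a bottom element of `X` gets utility `0` rather than the
junk value `sSup ∅`. -/
noncomputable def cutUtility (x : X) : ℝ :=
  sSup (insert 0 {t : ℝ | ∃ q, e q ≤ x ∧ t = (q : ℚ)})

private theorem one_mem_upperBounds_cut (x : X) :
    1 ∈ upperBounds (insert (0 : ℝ) {t : ℝ | ∃ q, e q ≤ x ∧ t = (q : ℚ)}) := by
  rintro t (rfl | ⟨q, -, rfl⟩)
  · exact zero_le_one
  · exact_mod_cast q.2.2.le

theorem cutUtility_nonneg (x : X) : 0 ≤ cutUtility e x :=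
  le_csSup ⟨1, one_mem_upperBounds_cut e x⟩ (mem_insert _ _)

theorem cutUtility_le_one (x : X) : cutUtility e x ≤ 1 :=
  csSup_le (insert_nonempty _ _) (one_mem_upperBounds_cut e x)

theorem le_cutUtility {x : X} {q : Ioo (0 : ℚ) 1} (h : e q ≤ x) : ((q : ℚ) : ℝ) ≤ cutUtility e x :=
  le_csSup ⟨1, one_mem_upperBounds_cut e x⟩ (mem_insert_of_mem _ ⟨q, h, rfl⟩)

theorem cutUtility_mono : Monotone (cutUtility e) := fun _ y hxy =>
  csSup_le_csSup ⟨1, one_mem_upperBounds_cut e y⟩ (insert_nonempty _ _)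
    (insert_subset_insert fun _ ⟨q, hq, ht⟩ => ⟨q, hq.trans hxy, ht⟩)

variable {e}

theorem cutUtility_le_of_lt (he : StrictMono e) {x : X} {q : Ioo (0 : ℚ) 1} (h : x < e q) :
    cutUtility e x ≤ (q : ℚ) := by
  refine csSup_le (insert_nonempty _ _) ?_
  rintro t (rfl | ⟨q', hq', rfl⟩)
  · exact_mod_cast q.2.1.le
  · exact_mod_cast (he.lt_iff_lt.mp (hq'.trans_lt h)).le

theorem cutUtility_strictMono (he : StrictMono e)
    (hdense : ∀ a b : X, a < b → ∃ q, a < e q ∧ e q < b) : StrictMono (cutUtility e) := by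
  intro x y hxy
  obtain ⟨q₁, hxq₁, hq₁y⟩ := hdense x y hxy
  obtain ⟨q₀, hxq₀, hq₀q₁⟩ := hdense x (e q₁) hxq₁
  calc cutUtility e x ≤ (q₀ : ℚ) := cutUtility_le_of_lt he hxq₀
    _ < (q₁ : ℚ) := by exact_mod_cast he.lt_iff_lt.mp hq₀q₁
    _ ≤ cutUtility e y := le_cutUtility e hq₁y.le

theorem lt_cutUtility_iff (he : StrictMono e) {t : ℝ} (ht : 0 ≤ t) {x : X} :
    t < cutUtility e x ↔ ∃ q : Ioo (0 : ℚ) 1, t < (q : ℚ) ∧ e q < x := by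
  refine ⟨fun h => ?_, fun ⟨q, htq, hqx⟩ => htq.trans_le (le_cutUtility e hqx.le)⟩
  obtain ⟨s, (rfl | ⟨q, hqx, rfl⟩), hts⟩ := exists_lt_of_lt_csSup (insert_nonempty _ _) h
  · exact absurd ht hts.not_ge
  obtain ⟨r, htr, hrq⟩ := exists_rat_btwn hts
  have hrq' : r < q := by exact_mod_cast hrq
  have hr : r ∈ Ioo (0 : ℚ) 1 := ⟨by exact_mod_cast ht.trans_lt htr, hrq'.trans q.2.2⟩
  exact ⟨⟨r, hr⟩, htr, (he (show (⟨r, hr⟩ : Ioo (0 : ℚ) 1) < q from hrq')).trans_le hqx⟩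

variable [@Std.Total X (· ≤ ·)]

theorem cutUtility_le_cutUtility_iff (he : StrictMono e)
    (hdense : ∀ a b : X, a < b → ∃ q, a < e q ∧ e q < b) {x y : X} :
    cutUtility e x ≤ cutUtility e y ↔ x ≤ y :=
  ⟨fun h => by_contra fun hxy => (cutUtility_strictMono he hdense
    (lt_of_not_ge_of_total hxy)).not_ge h, fun h => cutUtility_mono e h⟩

theorem cutUtility_lt_iff (he : StrictMono e) {t : ℝ} (ht : t ≤ 1) {x : X} :
    cutUtility e x < t ↔ ∃ q : Ioo (0 : ℚ) 1, ((q : ℚ) : ℝ) < t ∧ x < e q := by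
  refine ⟨fun h => ?_, fun ⟨q, hqt, hxq⟩ => (cutUtility_le_of_lt he hxq).trans_lt hqt⟩
  obtain ⟨r, hur, hrt⟩ := exists_rat_btwn h
  have hr : r ∈ Ioo (0 : ℚ) 1 := ⟨by exact_mod_cast (cutUtility_nonneg e x).trans_lt hur,
    by exact_mod_cast hrt.trans_le ht⟩
  refine ⟨⟨r, hr⟩, hrt, lt_of_not_ge_of_total fun hrx => ?_⟩
  exact (le_cutUtility e hrx).not_gt hur

theorem continuous_cutUtility [TopologicalSpace X] [ClosedIicTopology X] [ClosedIciTopology X]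
    (he : StrictMono e) : Continuous (cutUtility e) := by
  refine OrderTopology.continuous_iff.mpr fun t => ⟨?_, ?_⟩
  · rcases lt_or_ge t 0 with ht | ht
    · convert isOpen_univ
      exact eq_univ_of_forall fun x => ht.trans_le (cutUtility_nonneg e x)
    · have : cutUtility e ⁻¹' Ioi t = ⋃ (q : Ioo (0 : ℚ) 1) (_ : t < (q : ℚ)), Ioi (e q) := by
        ext x
        simp [lt_cutUtility_iff he ht]
      rw [this]
      exact isOpen_iUnion fun q => isOpen_iUnion fun _ => isOpen_Ioi_of_total _
  · rcases lt_or_ge 1 t with ht | ht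
    · convert isOpen_univ
      exact eq_univ_of_forall fun x => (cutUtility_le_one e x).trans_lt ht
    · have : cutUtility e ⁻¹' Iio t = ⋃ (q : Ioo (0 : ℚ) 1) (_ : ((q : ℚ) : ℝ) < t), Iio (e q) := by
        ext x
        simp [cutUtility_lt_iff he ht]
      rw [this]
      exact isOpen_iUnion fun q => isOpen_iUnion fun _ => isOpen_Iio_of_total _

end CutUtility

theorem exists_continuous_utility {X : Type*} [TopologicalSpace X] [Preorder X]
    [@Std.Total X (· ≤ ·)] [ClosedIicTopology X] [ClosedIciTopology X] [SeparableSpace X]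
    [PreconnectedSpace X] : ∃ u : X → ℝ, Continuous u ∧ ∀ x y, u x ≤ u y ↔ x ≤ y := by
  by_cases hindiff : ∀ x y : X, x ≤ y
  · exact ⟨0, continuous_const, fun x y => iff_of_true le_rfl (hindiff x y)⟩
  obtain ⟨x, y, hxy⟩ : ∃ x y : X, ¬x ≤ y := by simpa only [not_forall] using hindiff
  obtain ⟨D, hDc, hD⟩ := exists_countable_dense X
  obtain ⟨e, he, hed⟩ := exists_strictMono_ratIoo_of_countable hDc
    (fun _ _ => hD.exists_between_of_total) (lt_of_not_ge_of_total hxy)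
  exact ⟨cutUtility e, continuous_cutUtility he, fun _ _ => cutUtility_le_cutUtility_iff he hed⟩

theorem isClosed_induced_of_tendsto {ι E : Type*} [TopologicalSpace E] [FrechetUrysohnSpace E]
    {v : ι → E} {s : Set ι}
    (hs : ∀ (a : ι) (x : ℕ → ι), (∀ k, x k ∈ s) → Tendsto (fun k => v (x k)) atTop (𝓝 (v a)) →
      a ∈ s) :
    IsClosed[.induced v ‹_›] s := by
  let _ : TopologicalSpace ι := .induced v ‹_›
  refine isClosed_of_closure_subset fun a ha => ?_
  rw [(IsInducing.induced v).closure_eq_preimage_closure_image, mem_preimage,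
    mem_closure_iff_seq_limit] at ha
  obtain ⟨y, hy, hya⟩ := ha
  choose x hx hxy using hy
  exact hs a x hx (by simpa only [hxy] using hya)

theorem Function.FactorsThrough.continuousOn_extend {ι E F : Type*} [TopologicalSpace E]
    [TopologicalSpace F] {v : ι → E} {u : ι → F} (hf : u.FactorsThrough v)
    (hu : Continuous[.induced v ‹_›, _] u) (e' : E → F) :
    ContinuousOn (extend v u e') (range v) := by
  let _ : TopologicalSpace ι := .induced v ‹_›
  have hq : IsQuotientMap (rangeFactorization v) :=
    ((IsInducing.induced v).codRestrict mem_range_self).isQuotientMap_of_surjective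
      rangeFactorization_surjective
  rw [continuousOn_iff_continuous_domRestrict, hq.continuous_iff]
  convert hu
  exact hf.extend_comp e'

theorem quasiconcaveOn_of_convex_upperContour {𝕜 E β : Type*} [Semiring 𝕜] [PartialOrder 𝕜]
    [AddCommMonoid E] [SMul 𝕜 E] [LinearOrder β] {s : Set E} {f : E → β}
    (h : ∀ x ∈ s, Convex 𝕜 {y ∈ s | f x ≤ f y}) : QuasiconcaveOn 𝕜 s f := by
  intro c
  have : {y ∈ s | c ≤ f y} = ⋃ x : {x ∈ s | c ≤ f x}, {y ∈ s | f x ≤ f y} := by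
    ext y
    simp only [mem_iUnion, mem_ofPred_eq, Subtype.exists, exists_prop]
    constructor
    · exact fun hy => ⟨y, hy, hy.1, le_rfl⟩
    · rintro ⟨x, ⟨-, hcx⟩, hy, hxy⟩
      exact ⟨hy, hcx.trans hxy⟩
  rw [this]
  refine Directed.convex_iUnion (fun x x' => ?_) fun x => h x x.2.1
  rcases le_total (f x) (f x') with hxx' | hx'x
  · exact ⟨x, subset_rfl, fun y hy => ⟨hy.1, hxx'.trans hy.2⟩⟩
  · exact ⟨x', fun y hy => ⟨hy.1, hx'x.trans hy.2⟩, subset_rfl⟩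

theorem exists_continuousOn_utility_of_tendsto {ι E : Type*} [TopologicalSpace E]
    [SecondCountableTopology E] (v : ι → E) (pref : ι → ι → Prop)
    (hcomplete : ∀ A B, pref A B ∨ pref B A)
    (htrans : ∀ A B C, pref A B → pref B C → pref A C)
    (hcong : ∀ A B, v A = v B → pref A B)
    (hcont₁ : ∀ (A B : ι) (Ak : ℕ → ι), (∀ k, pref (Ak k) B) →
      Tendsto (fun k => v (Ak k)) atTop (𝓝 (v A)) → pref A B)
    (hcont₂ : ∀ (A B : ι) (Bk : ℕ → ι), (∀ k, pref A (Bk k)) →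
      Tendsto (fun k => v (Bk k)) atTop (𝓝 (v B)) → pref A B)
    (hconn : IsPreconnected (range v)) :
    ∃ φ : E → ℝ, ContinuousOn φ (range v) ∧ ∀ A B, pref A B ↔ φ (v B) ≤ φ (v A) := by
  let _ : TopologicalSpace ι := .induced v ‹_›
  let _ : Preorder ι :=
    { le := fun A B => pref B A
      le_refl := fun A => hcong A A rfl
      le_trans := fun A B C hAB hBC => htrans C B A hBC hAB }
  have : @Std.Total ι (· ≤ ·) := ⟨fun A B => hcomplete B A⟩
  have : ClosedIicTopology ι := ⟨fun A => isClosed_induced_of_tendsto fun B => hcont₂ A B⟩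
  have : ClosedIciTopology ι := ⟨fun A => isClosed_induced_of_tendsto fun B Bk hk =>
    hcont₁ B A Bk hk⟩
  have : SecondCountableTopology ι := secondCountableTopology_induced ι E v
  have : PreconnectedSpace ι :=
    ⟨(IsInducing.induced v).isPreconnected_image.mp (by rwa [image_univ])⟩
  obtain ⟨u, hu, hle⟩ := exists_continuous_utility (X := ι)
  have hf : u.FactorsThrough v := fun A B h =>
    le_antisymm ((hle A B).mpr (hcong B A h.symm)) ((hle B A).mpr (hcong A B h))
  refine ⟨extend v u 0, hf.continuousOn_extend hu 0, fun A B => ?_⟩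
  rw [hf.extend_apply, hf.extend_apply]
  exact (hle B A).symm

theorem stmt7_general {Ω : Type*} [MeasurableSpace Ω]
    {E : Type*} [NormedAddCommGroup E] [NormedSpace ℝ E]
    [TopologicalSpace.SeparableSpace E]
    (m : VectorMeasure Ω E)
    -- the range `m(Σ)` is convex
    (hrange : Convex ℝ {x | ∃ A : MSet Ω, x = m A.1})
    -- `≿` is a preference relation on `Σ`: complete and transitive
    (pref : MSet Ω → MSet Ω → Prop)
    (hcomplete : ∀ A B, pref A B ∨ pref B A)
    (htrans : ∀ A B C, pref A B → pref B C → pref A C)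
    -- vector representation: `m(A) = m(B)` implies `A ∼ B`
    (hcong : ∀ A B, m A.1 = m B.1 → pref A B ∧ pref B A)
    -- continuity
    (hcont₁ : ∀ (A B : MSet Ω) (Ak : ℕ → MSet Ω), (∀ k, pref (Ak k) B) →
      Tendsto (fun k => m (Ak k).1) atTop (nhds (m A.1)) → pref A B)
    (hcont₂ : ∀ (A B : MSet Ω) (Bk : ℕ → MSet Ω), (∀ k, pref A (Bk k)) →
      Tendsto (fun k => m (Bk k).1) atTop (nhds (m B.1)) → pref A B)
    -- convexity axiom: `m({B : B ≿ A})` is convex for every `A`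
    (hconv : ∀ A : MSet Ω, Convex ℝ {x | ∃ B : MSet Ω, pref B A ∧ x = m B.1}) :
    ∃ φ : E → ℝ, ContinuousOn φ {x | ∃ A : MSet Ω, x = m A.1} ∧
      QuasiconcaveOn ℝ {x | ∃ A : MSet Ω, x = m A.1} φ ∧ φ 0 = 0 ∧
      ∀ A B : MSet Ω, (pref A B ↔ φ (m B.1) ≤ φ (m A.1)) := by
  have hS : {x | ∃ A : MSet Ω, x = m A.1} = range fun A : MSet Ω => m A.1 := by
    ext x
    simp only [mem_ofPred_eq, mem_range, eq_comm]
  have := UniformSpace.secondCountable_of_separable E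
  obtain ⟨φ, hφc, hφ⟩ := exists_continuousOn_utility_of_tendsto (fun A : MSet Ω => m A.1) pref
    hcomplete htrans (fun A B h => (hcong A B h).1) hcont₁ hcont₂ (hS ▸ hrange.isPreconnected)
  refine ⟨fun x => φ x - φ 0, hS ▸ hφc.sub continuousOn_const,
    quasiconcaveOn_of_convex_upperContour ?_, sub_self _,
    fun A B => (hφ A B).trans (sub_le_sub_iff_right _).symm⟩
  rintro _ ⟨A, rfl⟩
  convert hconv A using 1
  ext y
  simp only [sub_le_sub_iff_right, mem_ofPred_eq]
  constructor
  · rintro ⟨⟨B, rfl⟩, hAB⟩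
    exact ⟨B, (hφ B A).mpr hAB, rfl⟩
  · rintro ⟨B, hBA, rfl⟩
    exact ⟨⟨B, rfl⟩, (hφ B A).mp hBA⟩

theorem stmt7 {Ω : Type*} [MeasurableSpace Ω] (μ : Measure Ω) [IsFiniteMeasure μ]
    {E : Type*} [NormedAddCommGroup E] [NormedSpace ℝ E]
    [TopologicalSpace.SeparableSpace E]
    (m : VectorMeasure Ω E)
    (habs : ∀ N : Set Ω, μ N = 0 → ∀ A : Set Ω, MeasurableSet A → m (A ∩ N) = 0)
    -- the range `m(Σ)` is convex
    (hrange : Convex ℝ {x | ∃ A : MSet Ω, x = m A.1})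
    -- `≿` is a preference relation on `Σ`: complete and transitive
    (pref : MSet Ω → MSet Ω → Prop)
    (hcomplete : ∀ A B, pref A B ∨ pref B A)
    (htrans : ∀ A B C, pref A B → pref B C → pref A C)
    -- vector representation: `m(A) = m(B)` implies `A ∼ B`
    (hcong : ∀ A B, m A.1 = m B.1 → pref A B ∧ pref B A)
    -- continuity
    (hcont₁ : ∀ (A B : MSet Ω) (Ak : ℕ → MSet Ω), (∀ k, pref (Ak k) B) →
      Tendsto (fun k => m (Ak k).1) atTop (nhds (m A.1)) → pref A B)
    (hcont₂ : ∀ (A B : MSet Ω) (Bk : ℕ → MSet Ω), (∀ k, pref A (Bk k)) →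
      Tendsto (fun k => m (Bk k).1) atTop (nhds (m B.1)) → pref A B)
    -- convexity axiom: `m({B : B ≿ A})` is convex for every `A`
    (hconv : ∀ A : MSet Ω, Convex ℝ {x | ∃ B : MSet Ω, pref B A ∧ x = m B.1}) :
    ∃ φ : E → ℝ, ContinuousOn φ {x | ∃ A : MSet Ω, x = m A.1} ∧
      QuasiconcaveOn ℝ {x | ∃ A : MSet Ω, x = m A.1} φ ∧ φ 0 = 0 ∧
      ∀ A B : MSet Ω, (pref A B ↔ φ (m B.1) ≤ φ (m A.1)) :=
  stmt7_general m hrange pref hcomplete htrans hcong hcont₁ hcont₂ hconv
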